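/- (Exponential in D(C,D,4).) Let m₁, m₂, m₃, m₄ be real numbers with m₂ ≠ 0. Define x₁(t) = e^{m₁t}·cos(m₂t), x₂(t) = e^{m₁t}·sin(m₂t), x₃(t) = e^{m₁t}·(m₃/m₂)·sin(m₂t), x₄(t) = e^{m₁t}·(m₄/m₂)·sin(m₂t). Then for every real t the functions satisfy the associated system: x₁'(t) = m₁x₁ − m₂x₂, x₂'(t) = m₂x₁ + m₁x₂, x₃'(t) = m₃x₁ + m₄x₂ + m₁x₃ − m₂x₄, x₄'(t) = m₄x₁ − m₃x₂ + m₂x₃ + m₁x₄ (each as a HasDerivAt statement), and (x₁(0), x₂(0), x₃(0), x₄(0)) = (1, 0, 0, 0); this establishes the representation Exp(M) = e^{m₁}(cos(m₂)·1 + (sin(m₂)/m₂)·(m₂·i + m₃·j + m₄·k)). -/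

import Mathlib

/-! `x₁ + i x₂ = exp ((m₁ + i m₂) t)`, so the first two equations are the real and imaginary
parts of `(exp (μ t))' = μ exp (μ t)`. The last two components are the constant multiples
`(m₃ / m₂) x₂` and `(m₄ / m₂) x₂` of the second, which makes the coupling terms `m₄ x₂ - m₂ x₄`
and `m₂ x₃ - m₃ x₂` vanish. -/

open Real

theorem hasDerivAt_exp_const_mul (a t : ℝ) :
    HasDerivAt (fun t => exp (a * t)) (exp (a * t) * a) t := by
  simpa using ((hasDerivAt_id t).const_mul a).exp

theorem hasDerivAt_exp_mul_mul_cos (a b t : ℝ) :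
    HasDerivAt (fun t => exp (a * t) * cos (b * t))
      (a * (exp (a * t) * cos (b * t)) - b * (exp (a * t) * sin (b * t))) t := by
  have he := hasDerivAt_exp_const_mul a t
  have hc : HasDerivAt (fun t => cos (b * t)) (-sin (b * t) * b) t := by
    simpa using ((hasDerivAt_id t).const_mul b).cos
  exact (he.mul hc).congr_deriv (by ring)

theorem hasDerivAt_exp_mul_mul_sin (a b t : ℝ) :
    HasDerivAt (fun t => exp (a * t) * sin (b * t))
      (b * (exp (a * t) * cos (b * t)) + a * (exp (a * t) * sin (b * t))) t := by
  have he := hasDerivAt_exp_const_mul a t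
  have hs : HasDerivAt (fun t => sin (b * t)) (cos (b * t) * b) t := by
    simpa using ((hasDerivAt_id t).const_mul b).sin
  exact (he.mul hs).congr_deriv (by ring)

theorem hasDerivAt_exp_mul_mul_const_mul_sin (a b c t : ℝ) :
    HasDerivAt (fun t => exp (a * t) * c * sin (b * t))
      (c * (b * (exp (a * t) * cos (b * t)) + a * (exp (a * t) * sin (b * t)))) t := by
  have hfun : (fun t => exp (a * t) * c * sin (b * t)) =
      fun t => c * (exp (a * t) * sin (b * t)) := by
    funext t
    ring
  rw [hfun]
  exact (hasDerivAt_exp_mul_mul_sin a b t).const_mul c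

/-- Exponential in D(C,D,4) = ℍ[ℝ,−1,0]: establishes Exp(M) = e^{m₁}(cos m₂ + (sin m₂ / m₂)(m₂·i + m₃·j + m₄·k)). The given functions solve the associated real linear ODE system of Ẋ = M·X with initial value (1,0,0,0). -/
theorem exp_CD (m₁ m₂ m₃ m₄ : ℝ)
    (h : m₂ ≠ 0)
    (x₁ x₂ x₃ x₄ : ℝ → ℝ)
    (hx₁ : x₁ = fun t => Real.exp (m₁ * t) * Real.cos (m₂ * t))
    (hx₂ : x₂ = fun t => Real.exp (m₁ * t) * Real.sin (m₂ * t))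
    (hx₃ : x₃ = fun t => Real.exp (m₁ * t) * (m₃ / m₂) * Real.sin (m₂ * t))
    (hx₄ : x₄ = fun t => Real.exp (m₁ * t) * (m₄ / m₂) * Real.sin (m₂ * t))
    :
    (∀ t : ℝ,
      HasDerivAt x₁ (m₁ * x₁ t - m₂ * x₂ t) t ∧
      HasDerivAt x₂ (m₂ * x₁ t + m₁ * x₂ t) t ∧
      HasDerivAt x₃ (m₃ * x₁ t + m₄ * x₂ t + m₁ * x₃ t - m₂ * x₄ t) t ∧
      HasDerivAt x₄ (m₄ * x₁ t - m₃ * x₂ t + m₂ * x₃ t + m₁ * x₄ t) t) ∧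
    x₁ 0 = 1 ∧ x₂ 0 = 0 ∧ x₃ 0 = 0 ∧ x₄ 0 = 0 := by
  subst hx₁ hx₂ hx₃ hx₄
  refine ⟨fun t => ⟨hasDerivAt_exp_mul_mul_cos m₁ m₂ t, hasDerivAt_exp_mul_mul_sin m₁ m₂ t, ?_, ?_⟩,
    by simp, by simp, by simp, by simp⟩
  · refine (hasDerivAt_exp_mul_mul_const_mul_sin m₁ m₂ (m₃ / m₂) t).congr_deriv ?_
    field_simp
    ring
  · refine (hasDerivAt_exp_mul_mul_const_mul_sin m₁ m₂ (m₄ / m₂) t).congr_deriv ?_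
    field_simp
    ring
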